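/- arXiv:2006.13504 — 4 statements merged into one kernel-verified Lean document; each statement's English description precedes it below -/
import Mathlib

section
/- Let l̂ = min{t ∈ ℕ : t·l ≡ 1 (mod n)}. Then for every integer m with m not congruent to 0 mod n and m not congruent to -1 mod n, the rational characteristic sequence satisfies k_{m - l̂} = k_m. -/
/-- The rational characteristic sequence with respect to `(n, l)`:
`k_m = ⌊(m+1)l/n⌋ - ⌊ml/n⌋` for `m ∈ ℤ`. -/
def charSeq (n l : ℕ) (m : ℤ) : ℤ :=
  Int.fdiv ((m + 1) * l) n - Int.fdiv (m * l) n

/-!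
Write `r(x) = x·l mod n`. Clearing denominators, `n·k_m = l - r(m+1) + r(m)`. Since
`l̂·l ≡ 1 (mod n)`, shifting `x` by `-l̂` lowers the residue `r(x)` by one, and this happens
without wrap-around exactly when `r(x) ≠ 0`, i.e. when `n ∤ x`. When `n` divides neither `m` nor
`m + 1`, the two residues drop by one together, so `n·k_m` is unchanged.
-/

theorem Nat.sInf_mul_mod_eq_one {n l : ℕ} (hn : 1 < n) (hln : l.Coprime n) :
    sInf {t : ℕ | t * l % n = 1} * l % n = 1 := by
  obtain ⟨t, -, ht⟩ := Nat.exists_mul_mod_eq_one_of_coprime hln hn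
  exact Nat.sInf_mem (s := {t : ℕ | t * l % n = 1}) ⟨t, by rwa [Set.mem_ofPred_eq, Nat.mul_comm]⟩

theorem Int.sub_mul_emod_eq_of_mul_emod_eq_one {n b c x : ℤ} (hn : 0 < n)
    (hc : c * b % n = 1) (hx : ¬ n ∣ x) : (x - c) * b % n = x * b % n - 1 := by
  have hcb : c * b ≡ 1 [ZMOD n] := by
    rw [Int.ModEq, hc, Int.emod_eq_of_lt zero_le_one (hc ▸ Int.emod_lt_of_pos _ hn)]
  have hres_ne : x * b % n ≠ 0 := by
    intro h
    have hxb : x * b ≡ 0 [ZMOD n] := Int.modEq_zero_iff_dvd.mpr (Int.dvd_of_emod_eq_zero h)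
    refine hx (Int.modEq_zero_iff_dvd.mp ?_)
    calc x = x * 1 := (mul_one x).symm
      _ ≡ x * (c * b) [ZMOD n] := hcb.symm.mul_left x
      _ = x * b * c := by ring
      _ ≡ 0 * c [ZMOD n] := hxb.mul_right c
      _ = 0 := zero_mul c
  have hres_nonneg := Int.emod_nonneg (x * b) hn.ne'
  have hres_lt := Int.emod_lt_of_pos (x * b) hn
  rw [sub_mul, Int.sub_emod, hc]
  exact Int.emod_eq_of_lt (by omega) (by omega)

theorem charSeq_mul_eq (n l : ℕ) (m : ℤ) :
    n * charSeq n l m = l - (m + 1) * l % n + m * l % n := by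
  have h₁ := Int.mul_ediv_add_emod ((m + 1) * l) n
  have h₂ := Int.mul_ediv_add_emod (m * l) n
  rw [charSeq, Int.fdiv_eq_ediv_of_nonneg _ n.cast_nonneg,
    Int.fdiv_eq_ediv_of_nonneg _ n.cast_nonneg]
  linear_combination h₁ - h₂

theorem charSeq_shift_general (n l : ℕ) (hn : 2 ≤ n)
    (hgcd : Nat.gcd n l = 1) (lhat : ℕ)
    (hlhat : lhat = sInf {t : ℕ | t * l % n = 1}) (m : ℤ)
    (h0 : ¬ (n : ℤ) ∣ m) (h1 : ¬ (n : ℤ) ∣ (m + 1)) :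
    charSeq n l (m - lhat) = charSeq n l m := by
  have hn₀ : (0 : ℤ) < n := by omega
  have hinv : (lhat : ℤ) * l % n = 1 := by
    rw [hlhat]
    exact_mod_cast Nat.sInf_mul_mod_eq_one hn (Nat.coprime_comm.mp hgcd)
  apply mul_left_cancel₀ hn₀.ne'
  rw [charSeq_mul_eq, charSeq_mul_eq, sub_add_eq_add_sub m (lhat : ℤ) 1,
    Int.sub_mul_emod_eq_of_mul_emod_eq_one hn₀ hinv h1,
    Int.sub_mul_emod_eq_of_mul_emod_eq_one hn₀ hinv h0]
  ring

/-- With `l̂ = min {t ∈ ℕ | t·l ≡ 1 (mod n)}`, one has `k_{m - l̂} = k_m`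
for `m` not ≡ `0` or `-1` mod `n`. -/
theorem charSeq_shift (n l : ℕ) (hn : 2 ≤ n) (hl : l < n)
    (hgcd : Nat.gcd n l = 1) (lhat : ℕ)
    (hlhat : lhat = sInf {t : ℕ | t * l % n = 1}) (m : ℤ)
    (h0 : ¬ (n : ℤ) ∣ m) (h1 : ¬ (n : ℤ) ∣ (m + 1)) :
    charSeq n l (m - lhat) = charSeq n l m :=
  charSeq_shift_general n l hn hgcd lhat hlhat m h0 h1
end

section
/- Suppose l/n < l'/n' and n·l' - n'·l = 1, where {k_m} and {k'_m} are the rational characteristic sequences with respect to (n,l) and (n',l') respectively. Define the (n+n')-periodic sequence {k̂_m} by k̂_m = k_m for m = 0,...,n-1 and k̂_m = k'_{m-n} for m = n,...,n+n'-1, extended (n+n')-periodically to all of ℤ. Then {k̂_m} is the rational characteristic sequence with respect to (n+n', l+l'), i.e. k̂_m = ⌊(m+1)(l+l')/(n+n')⌋ - ⌊m(l+l')/(n+n')⌋ for all m ∈ ℤ. -/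
lemma charSeq_eq_ediv (n l : ℕ) (m : ℤ) :
    charSeq n l m = ((m + 1) * l) / n - (m * l) / n := by
  unfold charSeq
  rw [Int.fdiv_eq_ediv_of_nonneg _ (by positivity), Int.fdiv_eq_ediv_of_nonneg _ (by positivity)]

lemma charSeq_period (n l : ℕ) (hn : 0 < n) (m : ℤ) :
    charSeq n l m = charSeq n l (m % n) := by
  have hnz : (n : ℤ) ≠ 0 := by positivity
  rw [charSeq_eq_ediv, charSeq_eq_ediv]
  have hme := Int.emod_add_mul_ediv m (n : ℤ)
  have h1 : (m + 1) * (l : ℤ) = (m % n + 1) * l + (m / n * l) * n := by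
    linear_combination (-(l : ℤ)) * hme
  have h2 : m * (l : ℤ) = (m % n) * l + (m / n * l) * n := by
    linear_combination (-(l : ℤ)) * hme
  rw [h1, h2, Int.add_mul_ediv_right _ _ hnz, Int.add_mul_ediv_right _ _ hnz]
  ring

lemma key1 (n l n' l' : ℕ) (hn : 0 < n) (hn' : 0 < n')
    (hfarey : (n : ℤ) * l' - (n' : ℤ) * l = 1) (r : ℤ) (h0 : 0 ≤ r) (h1 : r ≤ n) :
    (r * ((l : ℤ) + l')) / ((n : ℤ) + n') = (r * l) / n := by
  have hnz : (n : ℤ) ≠ 0 := by positivity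
  have hNz : (n : ℤ) + n' ≠ 0 := by positivity
  obtain ⟨q, s, hd, hs0, hs1⟩ : ∃ q s : ℤ, r * (l : ℤ) = n * q + s ∧ 0 ≤ s ∧ s < n :=
    ⟨(r * l) / n, (r * l) % n, (Int.mul_ediv_add_emod _ _).symm,
      Int.emod_nonneg _ hnz, Int.emod_lt_of_pos _ (by exact_mod_cast hn)⟩
  have hq : (r * (l : ℤ)) / n = q := by
    rw [show r * (l : ℤ) = s + n * q by linarith, Int.add_mul_ediv_left _ _ hnz,
      Int.ediv_eq_zero_of_lt hs0 hs1, zero_add]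
  set t : ℤ := r * ((l : ℤ) + l') - ((n : ℤ) + n') * q with ht
  have hnt : (n : ℤ) * t = r + s * ((n : ℤ) + n') := by
    rw [ht]; linear_combination r * hfarey + ((n : ℤ) + n') * hd
  have ht0 : 0 ≤ t := by
    nlinarith [mul_nonneg hs0 (by positivity : (0:ℤ) ≤ (n:ℤ) + n')]
  have ht1 : t < (n : ℤ) + n' := by
    nlinarith [mul_le_mul_of_nonneg_right (by omega : s ≤ (n:ℤ) - 1)
      (by positivity : (0:ℤ) ≤ (n:ℤ) + n')]
  have hrl : r * ((l : ℤ) + l') = t + ((n : ℤ) + n') * q := by rw [ht]; ring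
  rw [hrl, Int.add_mul_ediv_left t q hNz, Int.ediv_eq_zero_of_lt ht0 ht1, zero_add, hq]

lemma key2 (n l n' l' : ℕ) (hn : 0 < n) (hn' : 0 < n')
    (hfarey : (n : ℤ) * l' - (n' : ℤ) * l = 1) (s : ℤ) (h0 : 0 ≤ s) (h1 : s ≤ n') :
    ((s + n) * ((l : ℤ) + l')) / ((n : ℤ) + n') = (s * l') / n' + l := by
  have hnz : (n' : ℤ) ≠ 0 := by positivity
  have hNz : (n : ℤ) + n' ≠ 0 := by positivity
  obtain ⟨q, u, hd, hu0, hu1⟩ : ∃ q u : ℤ, s * (l' : ℤ) = n' * q + u ∧ 0 ≤ u ∧ u < n' :=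
    ⟨(s * l') / n', (s * l') % n', (Int.mul_ediv_add_emod _ _).symm,
      Int.emod_nonneg _ hnz, Int.emod_lt_of_pos _ (by exact_mod_cast hn')⟩
  have hq : (s * (l' : ℤ)) / n' = q := by
    rw [show s * (l' : ℤ) = u + n' * q by linarith, Int.add_mul_ediv_left _ _ hnz,
      Int.ediv_eq_zero_of_lt hu0 hu1, zero_add]
  set t : ℤ := (s + n) * ((l : ℤ) + l') - ((n : ℤ) + n') * (q + l) with ht
  have hnt : (n' : ℤ) * t = ((n' : ℤ) - s) + u * ((n : ℤ) + n') := by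
    rw [ht]; linear_combination ((n' : ℤ) - s) * hfarey + ((n : ℤ) + n') * hd
  have ht0 : 0 ≤ t := by
    nlinarith [mul_nonneg hu0 (by positivity : (0:ℤ) ≤ (n:ℤ) + n')]
  have ht1 : t < (n : ℤ) + n' := by
    nlinarith [mul_le_mul_of_nonneg_right (by omega : u ≤ (n':ℤ) - 1)
      (by positivity : (0:ℤ) ≤ (n:ℤ) + n')]
  have hrl : (s + n) * ((l : ℤ) + l') = t + ((n : ℤ) + n') * (q + l) := by rw [ht]; ring
  rw [hrl, Int.add_mul_ediv_left _ _ hNz, Int.ediv_eq_zero_of_lt ht0 ht1, zero_add, hq]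

lemma main_aux (n l n' l' : ℕ) (hn : 0 < n) (hn' : 0 < n')
    (hfarey : (n : ℤ) * l' - (n' : ℤ) * l = 1) (r : ℤ)
    (hr0 : 0 ≤ r) (hr1 : r < (n : ℤ) + n') :
    charSeq (n + n') (l + l') r =
      if r < n then charSeq n l r else charSeq n' l' (r - n) := by
  have hNc : ((n + n' : ℕ) : ℤ) = (n : ℤ) + n' := by push_cast; ring
  have hLc : ((l + l' : ℕ) : ℤ) = (l : ℤ) + l' := by push_cast; ring
  split_ifs with hcase
  · rw [charSeq_eq_ediv, charSeq_eq_ediv, hNc, hLc,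
      key1 n l n' l' hn hn' hfarey r hr0 (by omega),
      key1 n l n' l' hn hn' hfarey (r + 1) (by omega) (by omega)]
  · push_neg at hcase
    obtain ⟨s, rfl⟩ : ∃ s, r = s + n := ⟨r - n, by ring⟩
    rw [charSeq_eq_ediv, charSeq_eq_ediv, hNc, hLc]
    have e1 : s + (n : ℤ) + 1 = (s + 1) + n := by ring
    have e2 : s + (n : ℤ) - n = s := by ring
    rw [e1, e2,
      key2 n l n' l' hn hn' hfarey s (by omega) (by omega),
      key2 n l n' l' hn hn' hfarey (s + 1) (by omega) (by omega)]
    ring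

/-- Farey concatenation: the `(n+n')`-periodic sequence obtained by concatenating the
characteristic sequences of `(n,l)` and `(n',l')` is the characteristic sequence of
`(n+n', l+l')`, provided `l/n < l'/n'` and `n·l' - n'·l = 1`. -/
theorem charSeq_farey_concat (n l n' l' : ℕ)
    (hn : 2 ≤ n) (hl : l < n) (hgcd : Nat.gcd n l = 1)
    (hn' : 2 ≤ n') (hl' : l' < n') (hgcd' : Nat.gcd n' l' = 1)
    (hfrac : (l : ℚ) / n < (l' : ℚ) / n')
    (hfarey : (n : ℤ) * l' - (n' : ℤ) * l = 1) (m : ℤ) :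
    charSeq (n + n') (l + l') m =
      if m % ((n : ℤ) + n') < n then charSeq n l (m % ((n : ℤ) + n'))
      else charSeq n' l' (m % ((n : ℤ) + n') - n) := by
  have hN : (0 : ℤ) < (n : ℤ) + n' := by positivity
  have hNc : ((n + n' : ℕ) : ℤ) = (n : ℤ) + n' := by push_cast; ring
  have hper := charSeq_period (n + n') (l + l') (by omega) m
  rw [hNc] at hper
  rw [hper]
  exact main_aux n l n' l' (by omega) (by omega) hfarey _
    (Int.emod_nonneg _ (ne_of_gt hN)) (Int.emod_lt_of_pos _ hN)
end

section
/- Let S_{α,β}(x) = αx + β (mod 1) with (α,β) ∈ D_{n,l}. Then the n points p_i = β/(1-α) - A_i(α), i = 0,...,n-1, where A_i(α) = (1/(1-α^n))( Σ_{m=0}^{i-1} k_m α^{i-m-1} + Σ_{m=i}^{n-1} k_m α^{n+i-m-1} ), form a periodic orbit of period n for S_{α,β}; that is, S_{α,β}(p_i) = p_{i+1 mod n} for each i, and the p_i are pairwise distinct points of [0,1). -/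
/-- The upper boundary `B^U_{n,l}(α)`. -/
noncomputable def BU (n l : ℕ) (α : ℝ) : ℝ :=
  (1 - α) * ((1 / (1 - α ^ n)) * (∑ m ∈ Finset.Ico 1 n, (charSeq n l m : ℝ) * α ^ m) + 1)

/-- The lower boundary `B^L_{n,l}(α)`. -/
noncomputable def BL (n l : ℕ) (α : ℝ) : ℝ :=
  BU n l α - (1 - α) * (α ^ (n - 1) - α ^ n) / (1 - α ^ n)

/-- The parameter region `D_{n,l}`. -/
noncomputable def Dset (n l : ℕ) : Set (ℝ × ℝ) :=
  {p | p.1 ∈ Set.Ioo (0 : ℝ) 1 ∧ p.2 ∈ Set.Ioo (0 : ℝ) 1 ∧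
    BL n l p.1 ≤ p.2 ∧ p.2 < BU n l p.1}

/-- The Nagumo–Sato map `S_{α,β}(x) = αx + β (mod 1)`. -/
noncomputable def Smap (α β x : ℝ) : ℝ := Int.fract (α * x + β)

/-- `A_i(α)` from the formula for the periodic points. -/
noncomputable def Afun (n l : ℕ) (α : ℝ) (i : ℕ) : ℝ :=
  (1 / (1 - α ^ n)) *
    ((∑ m ∈ Finset.range i, (charSeq n l m : ℝ) * α ^ (i - m - 1)) +
      ∑ m ∈ Finset.Ico i n, (charSeq n l m : ℝ) * α ^ (n + i - m - 1))

/-!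
Put `c(x) = ⌊x/n⌋ - ⌊(x - l)/n⌋` (`arcIndicator`), the indicator of `x mod n < l`, so that
`k_m = c((m + 1) l)`, and `C(x) = ∑_{j<n} c(x - j l) α^j` (`codingSum`). Reflecting the two
sums in `A_i` gives `(1 - α^n) A_i = C(i l)`, and `C(x + l) = α C(x) + (1 - α^n) c(x + l)` says
`A_{i+1} = α A_i + k_i`, so `S` maps `p_i` to `p_{i+1}` once every `p_i` lies in `[0, 1)`.

`C` is `n`-periodic and `C(x) - C(x + 1) = α^a - α^b`, where `a, b < n` solve
`(a + 1) l ≡ x + 1 ≡ b l (mod n)`; for `0 ≤ x < n - 1` this forces `b = a + 1`, so `C` strictly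
decreases on `0, …, n - 1`. As `i ↦ i l mod n` permutes `0, …, n - 1`, the `A_i` are distinct, with
maximum `C(0)/(1 - α^n) = B^L/(1 - α)` and minimum `C(-1)/(1 - α^n) = B^U/(1 - α) - 1`; hence
`B^L ≤ β < B^U` is exactly what puts every `p_i` in `[0, 1)`.
-/

theorem Int.add_one_ediv_of_pos (x : ℤ) {n : ℤ} (hn : 0 < n) :
    (x + 1) / n = x / n + if n ∣ x + 1 then 1 else 0 := by
  have := Int.emod_add_mul_ediv x n
  have := Int.emod_add_mul_ediv (x + 1) n
  have := Int.emod_nonneg x hn.ne'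
  have := Int.emod_lt_of_pos x hn
  have := Int.emod_nonneg (x + 1) hn.ne'
  have := Int.emod_lt_of_pos (x + 1) hn
  split_ifs with h
  · have := Int.emod_eq_zero_of_dvd h
    nlinarith
  · have : (x + 1) % n ≠ 0 := fun h0 => h (Int.dvd_of_emod_eq_zero h0)
    have : 0 < (x + 1) % n := by omega
    nlinarith

theorem Int.neg_one_sub_ediv_of_pos (y : ℤ) {n : ℤ} (hn : 0 < n) :
    (-1 - y) / n = -1 - y / n := by
  have := Int.emod_add_mul_ediv y n
  have := Int.emod_nonneg y hn.ne'
  have := Int.emod_lt_of_pos y hn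
  exact ((Int.ediv_emod_unique hn (r := n - 1 - y % n)).mpr
    ⟨by linarith, by linarith, by linarith⟩).1

theorem Int.exists_natCast_modEq {n : ℕ} (hn : 0 < n) (x : ℤ) :
    ∃ r : ℕ, r < n ∧ x ≡ r [ZMOD n] := by
  have hn' : (0 : ℤ) < n := by exact_mod_cast hn
  have := Int.emod_lt_of_pos x hn'
  refine ⟨(x % n).toNat, by omega, ?_⟩
  rw [Int.toNat_of_nonneg (Int.emod_nonneg x hn'.ne')]
  exact (Int.mod_modEq x n).symm

theorem div_sub_mem_Ico_iff {c : ℝ} (hc : 0 < c) (β A : ℝ) :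
    β / c - A ∈ Set.Ico 0 1 ↔ c * A ≤ β ∧ β < c * (A + 1) := by
  rw [Set.mem_Ico, sub_nonneg, sub_lt_iff_lt_add', le_div_iff₀' hc, div_lt_iff₀' hc, add_comm]

theorem Smap_div_sub {α β A A' : ℝ} (hα : α ≠ 1) (k : ℤ) (hA : A' = α * A + k)
    (hmem : β / (1 - α) - A' ∈ Set.Ico 0 1) :
    Smap α β (β / (1 - α) - A) = β / (1 - α) - A' := by
  have h1α : 1 - α ≠ 0 := sub_ne_zero.mpr hα.symm
  have hlift : α * (β / (1 - α) - A) + β = β / (1 - α) - A' + k := by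
    rw [hA]
    field_simp
    ring
  rw [Smap, hlift, Int.fract_add_intCast, Int.fract_eq_self.mpr hmem]

def arcIndicator (n l : ℕ) (x : ℤ) : ℤ := x / n - (x - l) / n

noncomputable def codingSum (n l : ℕ) (α : ℝ) (x : ℤ) : ℝ :=
  ∑ j ∈ Finset.range n, (arcIndicator n l (x - j * l) : ℝ) * α ^ j

section
variable {n l : ℕ}

theorem charSeq_eq_arcIndicator (m : ℤ) : charSeq n l m = arcIndicator n l ((m + 1) * l) := by
  rw [charSeq, arcIndicator, Int.fdiv_eq_ediv_of_nonneg _ n.cast_nonneg,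
    Int.fdiv_eq_ediv_of_nonneg _ n.cast_nonneg]
  ring_nf

theorem charSeq_zero (hl : l < n) : charSeq n l 0 = 0 := by
  rw [charSeq_eq_arcIndicator, arcIndicator, zero_add, one_mul, sub_self, Int.zero_ediv,
    Int.ediv_eq_zero_of_lt l.cast_nonneg (by exact_mod_cast hl), sub_zero]

theorem arcIndicator_add_mul (hn : 0 < n) (x k : ℤ) :
    arcIndicator n l (x + k * n) = arcIndicator n l x := by
  have hn' : (n : ℤ) ≠ 0 := by exact_mod_cast hn.ne'
  rw [arcIndicator, arcIndicator, Int.add_mul_ediv_right _ _ hn',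
    show x + k * n - l = x - l + k * n by ring, Int.add_mul_ediv_right _ _ hn',
    add_sub_add_right_eq_sub]

theorem arcIndicator_sub_arcIndicator_add_one (hn : 0 < n) (x : ℤ) :
    arcIndicator n l x - arcIndicator n l (x + 1) =
      (if (n : ℤ) ∣ x + 1 - l then 1 else 0) - if (n : ℤ) ∣ x + 1 then 1 else 0 := by
  have hn' : (0 : ℤ) < n := by exact_mod_cast hn
  rw [arcIndicator, arcIndicator, Int.add_one_ediv_of_pos x hn',
    show x + 1 - l = x - l + 1 by ring, Int.add_one_ediv_of_pos _ hn']
  ring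

theorem arcIndicator_neg_one_sub (hn : 0 < n) (y : ℤ) :
    arcIndicator n l (-1 - y) = arcIndicator n l (y + l) := by
  have hn' : (0 : ℤ) < n := by exact_mod_cast hn
  rw [arcIndicator, arcIndicator, Int.neg_one_sub_ediv_of_pos y hn',
    show -1 - y - l = -1 - (y + l) by ring, Int.neg_one_sub_ediv_of_pos _ hn',
    add_sub_cancel_right]
  ring

theorem codingSum_add_mul (hn : 0 < n) (α : ℝ) (x k : ℤ) :
    codingSum n l α (x + k * n) = codingSum n l α x := by
  refine Finset.sum_congr rfl fun j _ => ?_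
  rw [add_sub_right_comm, arcIndicator_add_mul hn]

theorem codingSum_congr (hn : 0 < n) (α : ℝ) {x y : ℤ} (h : x ≡ y [ZMOD n]) :
    codingSum n l α x = codingSum n l α y := by
  obtain ⟨k, hk⟩ := h.dvd
  rw [← codingSum_add_mul hn α x k, show y = x + (y - x) by ring, hk, mul_comm]

theorem codingSum_add (hn : 0 < n) (α : ℝ) (x : ℤ) :
    codingSum n l α (x + l) = α * codingSum n l α x + (1 - α ^ n) * arcIndicator n l (x + l) := by
  obtain ⟨m, rfl⟩ := Nat.exists_eq_add_one_of_ne_zero hn.ne'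
  have hlast : arcIndicator (m + 1) l (x - m * l) = arcIndicator (m + 1) l (x + l) := by
    rw [show x - m * l = x + l + (-l : ℤ) * ((m + 1 : ℕ) : ℤ) by push_cast; ring,
      arcIndicator_add_mul hn]
  rw [codingSum, codingSum, Finset.sum_range_succ', Finset.mul_sum, Finset.sum_range_succ, hlast]
  simp only [Nat.cast_add, Nat.cast_one, Nat.cast_zero, zero_mul, sub_zero, pow_zero, pow_succ]
  have hshift : ∀ j ∈ Finset.range m,
      (arcIndicator (m + 1) l (x + l - (j + 1) * l) : ℝ) * (α ^ j * α) =
        α * ((arcIndicator (m + 1) l (x - j * l) : ℝ) * α ^ j) := fun j _ => by ring_nf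
  rw [Finset.sum_congr rfl hshift]
  ring

theorem Afun_eq_codingSum (hn : 0 < n) (α : ℝ) {i : ℕ} (hi : i ≤ n) :
    Afun n l α i = codingSum n l α (i * l) / (1 - α ^ n) := by
  set f : ℕ → ℝ := fun k => (arcIndicator n l (i * l - k * l) : ℝ) * α ^ k
  rw [Afun, codingSum, one_div_mul_eq_div, ← Finset.sum_range_add_sum_Ico f hi]
  congr 2
  · rw [← Finset.sum_range_reflect f]
    refine Finset.sum_congr rfl fun m hm => ?_
    have hm : m < i := Finset.mem_range.mp hm
    have hcast : ((i - 1 - m : ℕ) : ℤ) = i - (m + 1) := by omega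
    rw [charSeq_eq_arcIndicator, show i - m - 1 = i - 1 - m by omega]
    dsimp only [f]
    rw [hcast]
    ring_nf
  · have hrefl := Finset.sum_Ico_reflect f i (by omega : n ≤ n + i - 1 + 1)
    rw [show n + i - 1 + 1 - n = i by omega, show n + i - 1 + 1 - i = n by omega] at hrefl
    rw [← hrefl]
    refine Finset.sum_congr rfl fun m hm => ?_
    have hm : i ≤ m ∧ m < n := Finset.mem_Ico.mp hm
    have hcast : ((n + i - 1 - m : ℕ) : ℤ) = n + i - 1 - m := by omega
    rw [charSeq_eq_arcIndicator, show n + i - m - 1 = n + i - 1 - m by omega]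
    dsimp only [f]
    rw [hcast, ← arcIndicator_add_mul hn _ (-l)]
    ring_nf

theorem Afun_mod_add_one {α : ℝ} (hn : 0 < n) (hα : α ^ n ≠ 1) {i : ℕ} (hi : i < n) :
    Afun n l α ((i + 1) % n) = α * Afun n l α i + charSeq n l i := by
  have hD : 1 - α ^ n ≠ 0 := sub_ne_zero.mpr (Ne.symm hα)
  have hmod : (((i + 1) % n : ℕ) : ℤ) * l ≡ i * l + l [ZMOD n] := by
    rw [Int.natCast_mod, ← add_one_mul]
    exact (Int.mod_modEq _ _).mul_right _
  rw [Afun_eq_codingSum hn α (Nat.mod_lt _ hn).le, Afun_eq_codingSum hn α hi.le,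
    codingSum_congr hn α hmod, codingSum_add hn, charSeq_eq_arcIndicator, add_one_mul]
  field_simp

theorem natCast_dvd_sub_mul_iff (hnl : n.Coprime l) (y : ℤ) {j : ℕ} (hj : j < n) :
    (n : ℤ) ∣ y - j * l ↔ j = ((y : ZMod n) * (l : ZMod n)⁻¹).val := by
  have : NeZero n := ⟨by omega⟩
  have hl := ZMod.coe_mul_inv_eq_one l hnl.symm
  rw [← ZMod.intCast_zmod_eq_zero_iff_dvd]
  push_cast
  constructor
  · intro h
    rw [← ZMod.val_cast_of_lt hj]
    congr 1
    linear_combination (-(l : ZMod n)⁻¹) * h - (j : ZMod n) * hl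
  · intro h
    rw [h, ZMod.natCast_zmod_val]
    linear_combination -(y : ZMod n) * hl

theorem sum_range_ite_dvd_sub_mul [NeZero n] (hnl : n.Coprime l) (α : ℝ) (y : ℤ) :
    ∑ j ∈ Finset.range n, (if (n : ℤ) ∣ y - j * l then α ^ j else 0) =
      α ^ ((y : ZMod n) * (l : ZMod n)⁻¹).val := by
  rw [Finset.sum_congr rfl fun j hj =>
      if_congr (natCast_dvd_sub_mul_iff hnl y (Finset.mem_range.mp hj)) rfl rfl,
    Finset.sum_ite_eq', if_pos (Finset.mem_range.mpr (ZMod.val_lt _))]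

theorem codingSum_sub_codingSum_add_one [NeZero n] (hnl : n.Coprime l) (α : ℝ) (x : ℤ) :
    codingSum n l α x - codingSum n l α (x + 1) =
      α ^ (((x + 1 : ℤ) : ZMod n) * (l : ZMod n)⁻¹ - 1).val -
        α ^ (((x + 1 : ℤ) : ZMod n) * (l : ZMod n)⁻¹).val := by
  have hstep : ∀ j ∈ Finset.range n,
      (arcIndicator n l (x - j * l) : ℝ) * α ^ j - arcIndicator n l (x + 1 - j * l) * α ^ j =
        (if (n : ℤ) ∣ (x + 1 - l) - j * l then α ^ j else 0) -
          if (n : ℤ) ∣ (x + 1) - j * l then α ^ j else 0 := fun j _ => by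
    rw [← sub_mul, ← Int.cast_sub, show x + 1 - j * l = x - j * l + 1 by ring,
      arcIndicator_sub_arcIndicator_add_one (NeZero.pos n),
      show x - j * l + 1 - l = x + 1 - l - j * l by ring]
    push_cast
    simp only [sub_mul, ite_mul, one_mul, zero_mul]
  rw [codingSum, codingSum, ← Finset.sum_sub_distrib, Finset.sum_congr rfl hstep,
    Finset.sum_sub_distrib, sum_range_ite_dvd_sub_mul hnl, sum_range_ite_dvd_sub_mul hnl]
  push_cast
  rw [sub_mul, ZMod.coe_mul_inv_eq_one l hnl.symm]

theorem codingSum_natCast_strictAntiOn [Fact (1 < n)] {α : ℝ} (hnl : n.Coprime l) (hα0 : 0 < α)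
    (hα1 : α < 1) : StrictAntiOn (fun r : ℕ => codingSum n l α r) (Set.Iio n) := by
  refine strictAntiOn_of_add_one_lt Set.ordConnected_Iio fun r _ _ hr => ?_
  have hstep := codingSum_sub_codingSum_add_one hnl α r
  push_cast at hstep
  set v : ZMod n := ((r : ZMod n) + 1) * (l : ZMod n)⁻¹
  have hv : v ≠ 0 := by
    intro hv
    have hr1 : ((r + 1 : ℕ) : ZMod n) = 0 := by
      push_cast
      linear_combination
        (l : ZMod n) * hv - ((r : ZMod n) + 1) * ZMod.coe_mul_inv_eq_one l hnl.symm
    rw [ZMod.natCast_eq_zero_iff] at hr1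
    exact absurd (Nat.le_of_dvd r.succ_pos hr1) (not_le.mpr hr)
  have hval : (v - 1).val + 1 = v.val := by
    have := ZMod.val_pos.mpr hv
    rw [ZMod.val_sub (by rwa [ZMod.val_one]), ZMod.val_one]
    omega
  rw [← hval, pow_succ] at hstep
  push_cast
  nlinarith [pow_pos hα0 (v - 1).val]

theorem codingSum_modEq_of_eq [Fact (1 < n)] {α : ℝ} (hnl : n.Coprime l) (hα0 : 0 < α)
    (hα1 : α < 1) {x y : ℤ} (h : codingSum n l α x = codingSum n l α y) : x ≡ y [ZMOD n] := by
  have hn : 0 < n := Nat.zero_lt_of_lt (Fact.out : 1 < n)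
  obtain ⟨r, hr, hxr⟩ := Int.exists_natCast_modEq hn x
  obtain ⟨s, hs, hys⟩ := Int.exists_natCast_modEq hn y
  rw [codingSum_congr hn α hxr, codingSum_congr hn α hys] at h
  rw [(codingSum_natCast_strictAntiOn hnl hα0 hα1).injOn hr hs h] at hxr
  exact hxr.trans hys.symm

theorem codingSum_mem_Icc [Fact (1 < n)] {α : ℝ} (hnl : n.Coprime l) (hα0 : 0 < α)
    (hα1 : α < 1) (x : ℤ) :
    codingSum n l α x ∈ Set.Icc (codingSum n l α (-1)) (codingSum n l α 0) := by
  have hn : 0 < n := Nat.zero_lt_of_lt (Fact.out : 1 < n)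
  obtain ⟨r, hr, hxr⟩ := Int.exists_natCast_modEq hn x
  have hlast : codingSum n l α (-1) = codingSum n l α (n - 1 : ℕ) :=
    codingSum_congr hn α (Int.modEq_iff_dvd.mpr ⟨1, by omega⟩)
  have hanti := (codingSum_natCast_strictAntiOn hnl hα0 hα1).antitoneOn
  rw [codingSum_congr hn α hxr, hlast]
  exact ⟨hanti hr (Set.mem_Iio.mpr (by omega)) (by omega), hanti hn hr (Nat.zero_le r)⟩

theorem codingSum_neg_one_sub_codingSum_zero [NeZero n] (hnl : n.Coprime l) (α : ℝ) :
    codingSum n l α (-1) - codingSum n l α 0 = α ^ (n - 1) - 1 := by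
  obtain ⟨m, rfl⟩ := Nat.exists_eq_add_one_of_ne_zero (NeZero.ne n)
  simpa using codingSum_sub_codingSum_add_one hnl α (-1)

theorem codingSum_neg_one (hn : 0 < n) (hl : l < n) (α : ℝ) :
    codingSum n l α (-1) = ∑ m ∈ Finset.Ico 1 n, (charSeq n l m : ℝ) * α ^ m := by
  have hterm : ∀ j ∈ Finset.range n,
      (arcIndicator n l (-1 - j * l) : ℝ) * α ^ j = charSeq n l j * α ^ j := fun j _ => by
    rw [arcIndicator_neg_one_sub hn, charSeq_eq_arcIndicator, add_one_mul]
  rw [codingSum, Finset.sum_congr rfl hterm, Finset.range_eq_Ico,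
    Finset.sum_eq_sum_Ico_succ_bot hn, Nat.cast_zero, charSeq_zero hl, Int.cast_zero, zero_mul,
    zero_add]

theorem BU_eq_codingSum (hn : 0 < n) (hl : l < n) (α : ℝ) :
    BU n l α = (1 - α) * (codingSum n l α (-1) / (1 - α ^ n) + 1) := by
  rw [BU, codingSum_neg_one hn hl, one_div_mul_eq_div]

theorem BL_eq_codingSum [NeZero n] {α : ℝ} (hl : l < n) (hnl : n.Coprime l) (hα : α ^ n ≠ 1) :
    BL n l α = (1 - α) * (codingSum n l α 0 / (1 - α ^ n)) := by
  have hD : 1 - α ^ n ≠ 0 := sub_ne_zero.mpr (Ne.symm hα)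
  have hstep := codingSum_neg_one_sub_codingSum_zero hnl α
  rw [BL, BU_eq_codingSum (NeZero.pos n) hl]
  field_simp
  linear_combination (1 - α) * hstep

end

/-- For `(α,β) ∈ D_{n,l}`, the points `p_i = β/(1-α) - A_i(α)`, `i = 0,…,n-1`,
form a period-`n` orbit of `S_{α,β}`: `S_{α,β}(p_i) = p_{(i+1) mod n}`, and the `p_i`
are pairwise distinct points of `[0,1)`. -/
theorem periodic_orbit_formula (n l : ℕ) (hn : 2 ≤ n) (hl : l < n)
    (hgcd : Nat.gcd n l = 1) (α β : ℝ) (hD : (α, β) ∈ Dset n l) :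
    (∀ i < n, β / (1 - α) - Afun n l α i ∈ Set.Ico (0 : ℝ) 1) ∧
    (∀ i < n, Smap α β (β / (1 - α) - Afun n l α i) =
      β / (1 - α) - Afun n l α ((i + 1) % n)) ∧
    (∀ i < n, ∀ j < n, i ≠ j →
      β / (1 - α) - Afun n l α i ≠ β / (1 - α) - Afun n l α j) := by
  obtain ⟨⟨hα0, hα1⟩, -, hBL, hBU⟩ := hD
  have : Fact (1 < n) := ⟨hn⟩
  have hn0 : 0 < n := by omega
  have hαn : α ^ n < 1 := pow_lt_one₀ hα0.le hα1 (by omega)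
  have hden : 0 < 1 - α ^ n := sub_pos.mpr hαn
  have h1α : 0 < 1 - α := sub_pos.mpr hα1
  have hA : ∀ i ≤ n, Afun n l α i = codingSum n l α (i * l) / (1 - α ^ n) :=
    fun i => Afun_eq_codingSum hn0 α
  rw [BL_eq_codingSum hl hgcd hαn.ne] at hBL
  rw [BU_eq_codingSum hn0 hl] at hBU
  have hmem : ∀ i < n, β / (1 - α) - Afun n l α i ∈ Set.Ico 0 1 := by
    intro i hi
    obtain ⟨hlo, hhi⟩ := codingSum_mem_Icc hgcd hα0 hα1 (i * l)
    rw [div_sub_mem_Ico_iff h1α, hA i hi.le]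
    constructor
    · refine le_trans ?_ hBL; gcongr
    · refine hBU.trans_le ?_; gcongr
  refine ⟨hmem, fun i hi => ?_, fun i hi j hj hij => ?_⟩
  · exact Smap_div_sub hα1.ne _ (Afun_mod_add_one hn0 hαn.ne hi) (hmem _ (Nat.mod_lt _ hn0))
  · rw [Ne, sub_right_inj, hA i hi.le, hA j hj.le, div_left_inj' hden.ne']
    intro h
    have hij' := Int.natCast_modEq_iff.mp (by exact_mod_cast codingSum_modEq_of_eq hgcd hα0 hα1 h)
    exact hij ((hij'.cancel_right_of_coprime hgcd).eq_of_lt_of_lt hi hj)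
end

section
/- Let f satisfy (A1)–(A4) with termination number n, and additionally assume f is a contraction on each branch. Then f has a periodic orbit of period n, and each of the n closed subintervals of [0,1] determined by the partition points {f^{-i}(0) : i = 1,...,n-1} together with 0 and 1 contains exactly one point of this periodic orbit in its interior. -/
/-!
The points `p 0 = 0, p 1 = c, …, p (n-1)` cut `[0,1]` into `n` intervals; let `J k` be the one
with left endpoint `p k`. Since `f` is injective and `p (n-1)` has no preimage, a point that `f`
maps to a partition point is itself one. Together with the intermediate value theorem on the
continuous increasing branches this gives `f (J (k+1)) ⊆ J k`, and `f (J 0) ⊆ J (n-1)` because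
`p (n-1)` lies in the gap `(f 1, f 0)` of the image of `f`. Hence `f^[n]` maps the rightmost
interval, closed at `1`, continuously into itself and has a fixed point there, whose orbit visits
every `J k` exactly once. It misses the partition points: their backward orbits terminate, so none
of them is periodic.
-/

open Set Function Filter Topology

theorem continuousOn_of_abs_sub_le_mul {f : ℝ → ℝ} {s : Set ℝ} {κ : ℝ}
    (h : ∀ u ∈ s, ∀ v ∈ s, |f u - f v| ≤ κ * |u - v|) : ContinuousOn f s :=
  (LipschitzOnWith.of_dist_le' (by simpa only [Real.dist_eq] using h)).continuousOn

theorem mapsTo_continuousOn_iterate {α : Type*} [TopologicalSpace α] {f : α → α} {s : ℕ → Set α}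
    {N : ℕ} (h : ∀ k < N, MapsTo f (s (k + 1)) (s k) ∧ ContinuousOn f (s (k + 1))) :
    ∀ m k l, k + m = l → l ≤ N → MapsTo f^[m] (s l) (s k) ∧ ContinuousOn f^[m] (s l) := by
  intro m
  induction m with
  | zero => rintro k l rfl -; exact ⟨mapsTo_id _, continuousOn_id⟩
  | succ m ih =>
    rintro k l rfl hl
    obtain ⟨hmaps, hcont⟩ := ih k (k + m) rfl (by omega)
    obtain ⟨hmaps₁, hcont₁⟩ := h (k + m) (by omega)
    rw [iterate_succ]
    exact ⟨hmaps.comp hmaps₁, hcont.comp hcont₁ hmaps₁⟩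

theorem Finset.exists_strictMonoOn_enum {α : Type*} [LinearOrder α] (s : Finset α) (b : α)
    (hb : ∀ x ∈ s, x < b) :
    ∃ t : ℕ → α, StrictMonoOn t (Set.Iic s.card) ∧ t s.card = b ∧
      (∀ i < s.card, t i ∈ s) ∧ ∀ x ∈ s, ∃ i < s.card, t i = x := by
  set e := s.orderEmbOfFin rfl
  let t : ℕ → α := fun i => if h : i < s.card then e ⟨i, h⟩ else b
  have ht : ∀ i (h : i < s.card), t i = e ⟨i, h⟩ := fun i h => dif_pos h
  have hlast : t s.card = b := dif_neg (lt_irrefl _)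
  refine ⟨t, fun i hi j hj hij => ?_, hlast, fun i hi => ?_, fun x hx => ?_⟩
  · rcases (Set.mem_Iic.1 hj).lt_or_eq with hj | rfl
    · rw [ht i (hij.trans hj), ht j hj]
      exact e.strictMono hij
    · rw [ht i hij, hlast]
      exact hb _ (s.orderEmbOfFin_mem rfl _)
  · rw [ht i hi]
    exact s.orderEmbOfFin_mem rfl _
  · obtain ⟨⟨i, hi⟩, rfl⟩ : x ∈ Set.range e := by rw [s.range_orderEmbOfFin]; exact hx
    exact ⟨i, hi, ht i hi⟩

/-- `f 1 < f 0` makes `f` injective on `[0,1]`, with the gap `(f 1, f 0)` in its image. -/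
structure IsGapLorenzMap (f : ℝ → ℝ) (c : ℝ) : Prop where
  mem_Ioo : c ∈ Ioo (0 : ℝ) 1
  mapsTo : MapsTo f (Icc 0 1) (Icc 0 1)
  map_one_lt_map_zero : f 1 < f 0
  tendsto_left : Tendsto f (𝓝[<] c) (𝓝 1)
  map_c : f c = 0
  strictMonoOn_left : StrictMonoOn f (Ico 0 c)
  strictMonoOn_right : StrictMonoOn f (Icc c 1)
  continuousOn_left : ContinuousOn f (Ico 0 c)
  continuousOn_right : ContinuousOn f (Icc c 1)

namespace IsGapLorenzMap

variable {f : ℝ → ℝ} {c : ℝ}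

theorem map_zero_le (hf : IsGapLorenzMap f c) {x : ℝ} (hx : x ∈ Ico 0 c) : f 0 ≤ f x :=
  hf.strictMonoOn_left.monotoneOn ⟨le_rfl, hf.mem_Ioo.1⟩ hx hx.1

theorem map_le_map_one (hf : IsGapLorenzMap f c) {x : ℝ} (hx : x ∈ Icc c 1) : f x ≤ f 1 :=
  hf.strictMonoOn_right.monotoneOn hx ⟨hf.mem_Ioo.2.le, le_rfl⟩ hx.2

theorem injOn (hf : IsGapLorenzMap f c) : InjOn f (Icc 0 1) := by
  intro x hx y hy hxy
  have := hf.map_one_lt_map_zero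
  rcases lt_or_ge x c with hxc | hxc <;> rcases lt_or_ge y c with hyc | hyc
  · exact hf.strictMonoOn_left.injOn ⟨hx.1, hxc⟩ ⟨hy.1, hyc⟩ hxy
  · linarith [hf.map_zero_le ⟨hx.1, hxc⟩, hf.map_le_map_one ⟨hyc, hy.2⟩]
  · linarith [hf.map_zero_le ⟨hy.1, hyc⟩, hf.map_le_map_one ⟨hxc, hx.2⟩]
  · exact hf.strictMonoOn_right.injOn ⟨hxc, hx.2⟩ ⟨hyc, hy.2⟩ hxy

theorem map_lt_one (hf : IsGapLorenzMap f c) {x : ℝ} (hx : x ∈ Icc 0 1) : f x < 1 := by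
  obtain ⟨hc0, hc1⟩ := hf.mem_Ioo
  have hleft : ∀ y ∈ Ico 0 c, f y < 1 := fun y ⟨hy0, hyc⟩ =>
    calc f y < f ((y + c) / 2) :=
          hf.strictMonoOn_left ⟨hy0, hyc⟩ ⟨by linarith, by linarith⟩ (by linarith)
      _ ≤ 1 := (hf.mapsTo ⟨by linarith, by linarith⟩).2
  rcases lt_or_ge x c with h | h
  · exact hleft x ⟨hx.1, h⟩
  · linarith [hf.map_le_map_one ⟨h, hx.2⟩, hf.map_one_lt_map_zero, hleft 0 ⟨le_rfl, hc0⟩]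

theorem lt_one_of_isPeriodicPt (hf : IsGapLorenzMap f c) {x : ℝ} {m : ℕ} (hx : x ∈ Icc 0 1)
    (hper : IsPeriodicPt f m x) (hm : 0 < m) : x < 1 := by
  obtain ⟨m, rfl⟩ := Nat.exists_eq_succ_of_ne_zero hm.ne'
  rw [← hper.eq, iterate_succ_apply']
  exact hf.map_lt_one (hf.mapsTo.iterate m hx)

theorem mem_Ioo_of_forall_map_ne (hf : IsGapLorenzMap f c) {y : ℝ} (hy : y ∈ Ico 0 1)
    (hne : ∀ z ∈ Icc 0 1, f z ≠ y) : y ∈ Ioo (f 1) (f 0) := by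
  obtain ⟨hc0, hc1⟩ := hf.mem_Ioo
  constructor
  · by_contra! h
    obtain ⟨z, hz, hzy⟩ :=
      intermediate_value_Icc hc1.le hf.continuousOn_right ⟨hf.map_c ▸ hy.1, h⟩
    exact hne z ⟨hc0.le.trans hz.1, hz.2⟩ hzy
  · by_contra! h
    obtain ⟨x, hyx, hx0, hxc⟩ :=
      ((hf.tendsto_left.eventually (lt_mem_nhds hy.2)).and (Ioo_mem_nhdsLT hc0)).exists
    obtain ⟨z, hz, hzy⟩ := intermediate_value_Icc hx0.le
      (hf.continuousOn_left.mono fun w hw => ⟨hw.1, hw.2.trans_lt hxc⟩) ⟨h, hyx.le⟩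
    exact hne z ⟨hz.1, hz.2.trans (hxc.trans hc1).le⟩ hzy

end IsGapLorenzMap

structure IsTerminatingPreimageChain (f : ℝ → ℝ) (n : ℕ) (p : ℕ → ℝ) : Prop where
  two_le : 2 ≤ n
  zero : p 0 = 0
  mem_Ico : ∀ i < n, p i ∈ Ico (0 : ℝ) 1
  map_succ : ∀ i, i + 1 < n → f (p (i + 1)) = p i
  not_exists_map_eq : ¬ ∃ z ∈ Icc (0 : ℝ) 1, f z = p (n - 1)

/-- The interval `J k`: from `p k` up to the next of the points `p 0, …, p (n - 1)`, or up to and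
including `1` for the rightmost one. -/
def cell (p : ℕ → ℝ) (n k : ℕ) : Set ℝ :=
  {x | p k ≤ x ∧ x ≤ 1 ∧ ∀ j < n, p j ∉ Ioc (p k) x}

theorem Icc_subset_cell {p : ℕ → ℝ} {n k : ℕ} {x : ℝ} (hx : x ∈ cell p n k) :
    Icc (p k) x ⊆ cell p n k :=
  fun _ hy => ⟨hy.1, hy.2.trans hx.2.1, fun j hj hpj => hx.2.2 j hj ⟨hpj.1, hpj.2.trans hy.2⟩⟩

theorem eq_of_mem_cell {p : ℕ → ℝ} {n k k' : ℕ} {x : ℝ} (hinj : InjOn p (Iio n)) (hk : k < n)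
    (hk' : k' < n) (hx : x ∈ cell p n k) (hx' : x ∈ cell p n k') : k = k' := by
  rcases lt_trichotomy (p k) (p k') with h | h | h
  · exact (hx.2.2 k' hk' ⟨h, hx'.1⟩).elim
  · exact hinj hk hk' h
  · exact (hx'.2.2 k hk ⟨h, hx.1⟩).elim

namespace IsTerminatingPreimageChain

variable {f : ℝ → ℝ} {c : ℝ} {n : ℕ} {p : ℕ → ℝ}

theorem one_lt (hp : IsTerminatingPreimageChain f n p) : 1 < n := hp.two_le

theorem pos (hp : IsTerminatingPreimageChain f n p) : 0 < n := zero_lt_one.trans hp.one_lt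

theorem mem_Icc (hp : IsTerminatingPreimageChain f n p) {k : ℕ} (hk : k < n) : p k ∈ Icc 0 1 :=
  Ico_subset_Icc_self (hp.mem_Ico k hk)

theorem cell_subset_Icc (hp : IsTerminatingPreimageChain f n p) {k : ℕ} (hk : k < n) :
    cell p n k ⊆ Icc 0 1 :=
  fun _ hx => ⟨(hp.mem_Ico k hk).1.trans hx.1, hx.2.1⟩

theorem self_mem_cell (hp : IsTerminatingPreimageChain f n p) {k : ℕ} (hk : k < n) :
    p k ∈ cell p n k :=
  ⟨le_rfl, (hp.mem_Icc hk).2, fun _ _ h => h.1.not_ge h.2⟩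

theorem succ_lt_and_eq_of_map_eq (hp : IsTerminatingPreimageChain f n p) (hf : IsGapLorenzMap f c)
    {z : ℝ} {k : ℕ} (hz : z ∈ Icc 0 1) (hk : k < n) (h : f z = p k) :
    k + 1 < n ∧ z = p (k + 1) := by
  by_cases hk1 : k + 1 < n
  · exact ⟨hk1, hf.injOn hz (hp.mem_Icc hk1) (h.trans (hp.map_succ k hk1).symm)⟩
  · exact (hp.not_exists_map_eq ⟨z, hz, by rw [h, show k = n - 1 by omega]⟩).elim

theorem add_lt_and_eq_of_iterate_eq (hp : IsTerminatingPreimageChain f n p)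
    (hf : IsGapLorenzMap f c) (m : ℕ) {z : ℝ} {k : ℕ} (hz : z ∈ Icc 0 1) (hk : k < n)
    (h : f^[m] z = p k) : k + m < n ∧ z = p (k + m) := by
  induction m generalizing z with
  | zero => exact ⟨hk, h⟩
  | succ m ih =>
    rw [iterate_succ_apply] at h
    obtain ⟨hkm, hfz⟩ := ih (hf.mapsTo hz) h
    exact hp.succ_lt_and_eq_of_map_eq hf hz hkm hfz

theorem iterate_map_add (hp : IsTerminatingPreimageChain f n p) {k m : ℕ} (h : k + m < n) :
    f^[m] (p (k + m)) = p k := by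
  induction m with
  | zero => rfl
  | succ m ih => rw [iterate_succ_apply, ← add_assoc, hp.map_succ (k + m) (by omega), ih (by omega)]

theorem not_isPeriodicPt (hp : IsTerminatingPreimageChain f n p) (hf : IsGapLorenzMap f c)
    {k m : ℕ} (hk : k < n) (hm : 0 < m) : ¬ IsPeriodicPt f m (p k) := fun hper => by
  have := (hp.add_lt_and_eq_of_iterate_eq hf (m * n) (hp.mem_Icc hk) hk (hper.mul_const n)).1
  have := Nat.le_mul_of_pos_left n hm
  omega

theorem injOn (hp : IsTerminatingPreimageChain f n p) (hf : IsGapLorenzMap f c) :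
    InjOn p (Iio n) := by
  suffices ∀ i j, i < j → j < n → p i ≠ p j by
    intro i hi j hj hij
    by_contra hne
    rcases lt_or_gt_of_ne hne with h | h
    exacts [this i j h hj hij, this j i h hi hij.symm]
  intro i j hij hj heq
  have hd : p (j - i) = p 0 := calc
    p (j - i) = f^[i] (p (j - i + i)) := (hp.iterate_map_add (by omega)).symm
    _ = f^[i] (p (0 + i)) := by rw [Nat.sub_add_cancel hij.le, zero_add, heq]
    _ = p 0 := hp.iterate_map_add (by omega)
  refine hp.not_isPeriodicPt hf (k := j - i) (by omega) (Nat.sub_pos_of_lt hij) ?_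
  calc f^[j - i] (p (j - i)) = f^[j - i] (p (0 + (j - i))) := by rw [zero_add]
    _ = p (j - i) := by rw [hp.iterate_map_add (by omega), hd]

theorem one_eq (hp : IsTerminatingPreimageChain f n p) (hf : IsGapLorenzMap f c) : p 1 = c := by
  have h := hp.map_succ 0 hp.one_lt
  rw [zero_add, hp.zero, ← hf.map_c] at h
  exact hf.injOn (hp.mem_Icc hp.one_lt) (Ioo_subset_Icc_self hf.mem_Ioo) h

theorem last_mem_Ioo (hp : IsTerminatingPreimageChain f n p) (hf : IsGapLorenzMap f c) :
    p (n - 1) ∈ Ioo (f 1) (f 0) :=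
  hf.mem_Ioo_of_forall_map_ne (hp.mem_Ico _ (Nat.sub_lt hp.pos one_pos)) fun z hz h =>
    hp.not_exists_map_eq ⟨z, hz, h⟩

theorem cell_subset_left_or_right (hp : IsTerminatingPreimageChain f n p) (hf : IsGapLorenzMap f c)
    {k : ℕ} (hk : k < n) : cell p n k ⊆ Ico 0 c ∨ cell p n k ⊆ Icc c 1 := by
  rcases lt_or_ge (p k) c with h | h
  · refine Or.inl fun x hx => ⟨(hp.mem_Ico k hk).1.trans hx.1, lt_of_not_ge fun hcx => ?_⟩
    exact hx.2.2 1 hp.one_lt ⟨by rwa [hp.one_eq hf], by rwa [hp.one_eq hf]⟩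
  · exact Or.inr fun x hx => ⟨h.trans hx.1, hx.2.1⟩

theorem continuousOn_cell (hp : IsTerminatingPreimageChain f n p) (hf : IsGapLorenzMap f c)
    {k : ℕ} (hk : k < n) : ContinuousOn f (cell p n k) :=
  (hp.cell_subset_left_or_right hf hk).elim hf.continuousOn_left.mono hf.continuousOn_right.mono

theorem monotoneOn_cell (hp : IsTerminatingPreimageChain f n p) (hf : IsGapLorenzMap f c)
    {k : ℕ} (hk : k < n) : MonotoneOn f (cell p n k) :=
  (hp.cell_subset_left_or_right hf hk).elim hf.strictMonoOn_left.monotoneOn.mono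
    hf.strictMonoOn_right.monotoneOn.mono

/-- Only `p (k - 1) = f (p k)` can lie in `f '' [p k, x]`: a preimage would be a partition point
in `[p k, x]`. -/
theorem succ_eq_of_mem_Icc (hp : IsTerminatingPreimageChain f n p) (hf : IsGapLorenzMap f c)
    {k j : ℕ} {x : ℝ} (hk : k < n) (hj : j < n) (hx : x ∈ cell p n k)
    (hpj : p j ∈ Icc (f (p k)) (f x)) : j + 1 = k := by
  obtain ⟨z, hz, hzj⟩ :=
    intermediate_value_Icc hx.1 ((hp.continuousOn_cell hf hk).mono (Icc_subset_cell hx)) hpj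
  obtain ⟨hj1, rfl⟩ := hp.succ_lt_and_eq_of_map_eq hf
    (hp.cell_subset_Icc hk (Icc_subset_cell hx hz)) hj hzj
  exact hp.injOn hf hj1 hk (eq_of_le_of_not_lt' hz.1 fun h => hx.2.2 (j + 1) hj1 ⟨h, hz.2⟩)

theorem mapsTo_cell_succ (hp : IsTerminatingPreimageChain f n p) (hf : IsGapLorenzMap f c)
    {k : ℕ} (hk : k + 1 < n) : MapsTo f (cell p n (k + 1)) (cell p n k) := by
  intro x hx
  have hfp : f (p (k + 1)) = p k := hp.map_succ k hk
  refine ⟨hfp ▸ hp.monotoneOn_cell hf hk (hp.self_mem_cell hk) hx hx.1,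
    (hf.mapsTo (hp.cell_subset_Icc hk hx)).2, fun j hj hpj => ?_⟩
  have := hp.succ_eq_of_mem_Icc hf hk hj hx ⟨hfp ▸ hpj.1.le, hpj.2⟩
  exact hpj.1.ne (by rw [show j = k by omega])

theorem mapsTo_cell_zero (hp : IsTerminatingPreimageChain f n p) (hf : IsGapLorenzMap f c) :
    MapsTo f (cell p n 0) (cell p n (n - 1)) := by
  intro x hx
  have hn := hp.pos
  have hf0 : f 0 ≤ f x := hp.zero ▸ hp.monotoneOn_cell hf hn (hp.self_mem_cell hn) hx hx.1
  have hgap := hp.last_mem_Ioo hf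
  refine ⟨hgap.2.le.trans hf0, (hf.mapsTo (hp.cell_subset_Icc hn hx)).2, fun j hj hpj => ?_⟩
  rcases le_or_gt (f 0) (p j) with h | h
  · have := hp.succ_eq_of_mem_Icc hf hn hj hx ⟨hp.zero ▸ h, hpj.2⟩
    omega
  · -- `p j` lies in the gap `(f 1, f 0)`, but it has the preimage `p (j + 1)`.
    have hj1 : j + 1 < n := by
      by_contra hj1
      exact hpj.1.ne (by rw [show j = n - 1 by omega])
    have hfp := hp.map_succ j hj1
    have := hf.map_one_lt_map_zero
    rcases lt_or_ge (p (j + 1)) c with hc | hc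
    · linarith [hf.map_zero_le ⟨(hp.mem_Ico _ hj1).1, hc⟩]
    · linarith [hf.map_le_map_one ⟨hc, (hp.mem_Icc hj1).2⟩, hgap.1, hpj.1]

theorem mapsTo_continuousOn_iterate_cell (hp : IsTerminatingPreimageChain f n p)
    (hf : IsGapLorenzMap f c) {m k l : ℕ} (h : k + m = l) (hl : l < n) :
    MapsTo f^[m] (cell p n l) (cell p n k) ∧ ContinuousOn f^[m] (cell p n l) :=
  mapsTo_continuousOn_iterate (N := n - 1)
    (fun _ hk => ⟨hp.mapsTo_cell_succ hf (by omega), hp.continuousOn_cell hf (by omega)⟩)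
    m k l h (by omega)

theorem exists_isPeriodicPt_mem_cell (hp : IsTerminatingPreimageChain f n p)
    (hf : IsGapLorenzMap f c) : ∃ x ∈ cell p n (n - 1), IsPeriodicPt f n x := by
  have hn := hp.pos
  obtain ⟨K, hK, hmax⟩ := (Finset.range n).exists_max_image p ⟨0, Finset.mem_range.2 hn⟩
  rw [Finset.mem_range] at hK
  have hcellK : cell p n K = Icc (p K) 1 := Subset.antisymm (fun x hx => ⟨hx.1, hx.2.1⟩)
    fun x hx => ⟨hx.1, hx.2, fun j hj h => (hmax j (Finset.mem_range.2 hj)).not_gt h.1⟩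
  obtain ⟨hmaps₁, hcont₁⟩ := hp.mapsTo_continuousOn_iterate_cell hf (m := K) (zero_add K) hK
  obtain ⟨hmaps₂, hcont₂⟩ := hp.mapsTo_continuousOn_iterate_cell hf
    (m := n - 1 - K) (k := K) (l := n - 1) (by omega) (by omega)
  have hmaps : MapsTo (f ∘ f^[K]) (cell p n K) (cell p n (n - 1)) :=
    (hp.mapsTo_cell_zero hf).comp hmaps₁
  have hsplit : f^[n] = f^[n - 1 - K] ∘ (f ∘ f^[K]) := by
    rw [← iterate_succ', ← iterate_add]
    congr 1
    omega
  have hcont : ContinuousOn f^[n] (Icc (p K) 1) := by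
    rw [hsplit, ← hcellK]
    exact hcont₂.comp ((hp.continuousOn_cell hf hn).comp hcont₁ hmaps₁) hmaps
  obtain ⟨x, hxK, hx⟩ := exists_mem_Icc_isFixedPt_of_mapsTo hcont (hp.mem_Icc hK).2
    (by rw [hsplit, ← hcellK]; exact hmaps₂.comp hmaps)
  exact ⟨f (f^[K] x), hmaps (by rwa [hcellK]), by
    simpa only [← iterate_succ_apply' f K x] using IsPeriodicPt.apply_iterate hx (K + 1)⟩

end IsTerminatingPreimageChain

structure IsOrderedEnum (t p : ℕ → ℝ) (n : ℕ) : Prop where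
  strictMonoOn : StrictMonoOn t (Iic n)
  last : t n = 1
  exists_eq_p : ∀ i < n, ∃ k < n, t i = p k
  exists_t_eq : ∀ k < n, ∃ i < n, t i = p k

namespace IsOrderedEnum

variable {t p : ℕ → ℝ} {n : ℕ}

theorem zero_eq (ht : IsOrderedEnum t p n) (hn : 0 < n) (hmin : ∀ k < n, p 0 ≤ p k) :
    t 0 = p 0 := by
  obtain ⟨k, hk, htk⟩ := ht.exists_eq_p 0 hn
  obtain ⟨i, hi, hti⟩ := ht.exists_t_eq 0 hn
  have : t 0 ≤ t i := ht.strictMonoOn.monotoneOn (mem_Iic.2 hn.le) (mem_Iic.2 hi.le) i.zero_le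
  linarith [hmin k hk]

theorem exists_p_of_one_le (ht : IsOrderedEnum t p n) (h0 : t 0 = p 0) :
    ∀ i, 1 ≤ i → i ≤ n - 1 → ∃ k, 1 ≤ k ∧ k ≤ n - 1 ∧ t i = p k := by
  intro i hi1 hin
  obtain ⟨k, hk, htk⟩ := ht.exists_eq_p i (by omega)
  refine ⟨k, Nat.one_le_iff_ne_zero.2 fun hk0 => ?_, by omega, htk⟩
  have := ht.strictMonoOn (mem_Iic.2 (Nat.zero_le n)) (mem_Iic.2 (by omega)) hi1
  rw [h0, htk, hk0] at this
  exact lt_irrefl _ this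

theorem exists_t_of_one_le (ht : IsOrderedEnum t p n) (h0 : t 0 = p 0) (hinj : InjOn p (Iio n)) :
    ∀ k, 1 ≤ k → k ≤ n - 1 → ∃ i, 1 ≤ i ∧ i ≤ n - 1 ∧ t i = p k := by
  intro k hk1 hkn
  obtain ⟨i, hi, hti⟩ := ht.exists_t_eq k (by omega)
  refine ⟨i, Nat.one_le_iff_ne_zero.2 fun hi0 => ?_, by omega, hti⟩
  have := hinj (show 0 < n by omega) (show k < n by omega) (h0.symm.trans (hi0 ▸ hti))
  omega

theorem Ioo_subset_cell (ht : IsOrderedEnum t p n) {i k : ℕ} (hi : i < n) (htk : t i = p k) :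
    Ioo (t i) (t (i + 1)) ⊆ cell p n k := by
  have hmono := ht.strictMonoOn
  intro x hx
  refine ⟨htk ▸ hx.1.le, hx.2.le.trans ?_, fun j hj hpj => ?_⟩
  · rw [← ht.last]
    exact hmono.monotoneOn (mem_Iic.2 hi) (mem_Iic.2 le_rfl) hi
  · obtain ⟨l, hl, htl⟩ := ht.exists_t_eq j hj
    rw [← htl] at hpj
    have h1 := (hmono.lt_iff_lt (mem_Iic.2 hi.le) (mem_Iic.2 hl.le)).1 (htk ▸ hpj.1)
    have h2 := (hmono.lt_iff_lt (mem_Iic.2 hl.le) (mem_Iic.2 hi)).1 (hpj.2.trans_lt hx.2)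
    omega

theorem mem_Ioo_of_mem_cell (ht : IsOrderedEnum t p n) {i k : ℕ} {x : ℝ} (hi : i < n)
    (htk : t i = p k) (hx : x ∈ cell p n k) (hx1 : x < 1) (hxk : x ≠ p k) :
    x ∈ Ioo (t i) (t (i + 1)) := by
  refine ⟨htk ▸ lt_of_le_of_ne hx.1 (Ne.symm hxk), ?_⟩
  rcases (show i + 1 ≤ n from hi).eq_or_lt with h | h
  · rwa [h, ht.last]
  · obtain ⟨j, hj, htj⟩ := ht.exists_eq_p (i + 1) h
    by_contra! hle
    have := ht.strictMonoOn (mem_Iic.2 hi.le) (mem_Iic.2 h.le) (Nat.lt_succ_self i)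
    exact hx.2.2 j hj ⟨htk ▸ htj ▸ this, htj ▸ hle⟩

theorem existsUnique_mem_Ioo (ht : IsOrderedEnum t p n) (hinj : InjOn p (Iio n)) {q : ℕ → ℝ}
    (hq : ∀ m < n, q m ∈ cell p n (n - 1 - m) ∧ q m < 1 ∧ ∀ k < n, q m ≠ p k) {i : ℕ}
    (hi : i < n) : ∃! m, m < n ∧ q m ∈ Ioo (t i) (t (i + 1)) := by
  obtain ⟨k, hk, htk⟩ := ht.exists_eq_p i hi
  obtain ⟨hcell, hlt, hne⟩ := hq (n - 1 - k) (by omega)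
  rw [show n - 1 - (n - 1 - k) = k by omega] at hcell
  refine ⟨n - 1 - k, ⟨by omega, ht.mem_Ioo_of_mem_cell hi htk hcell hlt (hne k hk)⟩, ?_⟩
  rintro m ⟨hm, hqm⟩
  have := eq_of_mem_cell hinj hk (by omega) (ht.Ioo_subset_cell hi htk hqm) (hq m hm).1
  omega

end IsOrderedEnum

theorem IsTerminatingPreimageChain.exists_isOrderedEnum {f : ℝ → ℝ} {c : ℝ} {n : ℕ} {p : ℕ → ℝ}
    (hp : IsTerminatingPreimageChain f n p) (hf : IsGapLorenzMap f c) :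
    ∃ t, IsOrderedEnum t p n := by
  classical
  set s := (Finset.range n).image p
  have hcard : s.card = n := by
    rw [Finset.card_image_of_injOn, Finset.card_range]
    simpa only [Finset.coe_range] using hp.injOn hf
  obtain ⟨t, hmono, hlast, hts, hst⟩ := s.exists_strictMonoOn_enum 1 fun x hx => by
    obtain ⟨k, hk, rfl⟩ := Finset.mem_image.1 hx
    exact (hp.mem_Ico k (Finset.mem_range.1 hk)).2
  rw [hcard] at hmono hlast hts hst
  refine ⟨t, hmono, hlast, fun i hi => ?_, fun k hk => ?_⟩
  · obtain ⟨k, hk, htk⟩ := Finset.mem_image.1 (hts i hi)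
    exact ⟨k, Finset.mem_range.1 hk, htk.symm⟩
  · exact hst (p k) (Finset.mem_image_of_mem p (Finset.mem_range.2 hk))

theorem periodic_orbit_in_partition_general (f : ℝ → ℝ) (c : ℝ) (hc : c ∈ Set.Ioo (0 : ℝ) 1)
    (hmaps : Set.MapsTo f (Set.Icc 0 1) (Set.Icc 0 1))
    (hA1 : f 1 < f 0)
    (hA2left : Filter.Tendsto f (nhdsWithin c (Set.Iio c)) (nhds 1))
    (hA2right : f c = 0)
    (hA3left : StrictMonoOn f (Set.Ico 0 c))
    (hA3right : StrictMonoOn f (Set.Icc c 1))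
    (κ : ℝ)
    (hcontract₁ : ∀ u ∈ Set.Ico (0 : ℝ) c, ∀ v ∈ Set.Ico (0 : ℝ) c,
      |f u - f v| ≤ κ * |u - v|)
    (hcontract₂ : ∀ u ∈ Set.Icc c 1, ∀ v ∈ Set.Icc c 1,
      |f u - f v| ≤ κ * |u - v|)
    (n : ℕ) (hn : 2 ≤ n)
    (p : ℕ → ℝ) (hp0 : p 0 = 0)
    (hpmem : ∀ i < n, p i ∈ Set.Ico (0 : ℝ) 1)
    (hpstep : ∀ i, i + 1 < n → f (p (i + 1)) = p i)
    (hA4 : ¬ ∃ z ∈ Set.Icc (0 : ℝ) 1, f z = p (n - 1)) :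
    ∃ t : ℕ → ℝ, t 0 = 0 ∧ t n = 1 ∧
      (∀ i j, i < j → j ≤ n → t i < t j) ∧
      (∀ i, 1 ≤ i → i ≤ n - 1 → ∃ j, 1 ≤ j ∧ j ≤ n - 1 ∧ t i = p j) ∧
      (∀ j, 1 ≤ j → j ≤ n - 1 → ∃ i, 1 ≤ i ∧ i ≤ n - 1 ∧ t i = p j) ∧
      ∃ q : ℕ → ℝ,
        (∀ i < n, q i ∈ Set.Icc (0 : ℝ) 1) ∧
        (∀ i < n, f (q i) = q ((i + 1) % n)) ∧
        (∀ i < n, ∀ j < n, i ≠ j → q i ≠ q j) ∧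
        (∀ i < n, ∃! j, j < n ∧ q j ∈ Set.Ioo (t i) (t (i + 1))) := by
  have hf : IsGapLorenzMap f c := ⟨hc, hmaps, hA1, hA2left, hA2right, hA3left, hA3right,
    continuousOn_of_abs_sub_le_mul hcontract₁, continuousOn_of_abs_sub_le_mul hcontract₂⟩
  have hp : IsTerminatingPreimageChain f n p := ⟨hn, hp0, hpmem, hpstep, hA4⟩
  have hn0 := hp.pos
  have hinj := hp.injOn hf
  obtain ⟨t, ht⟩ := hp.exists_isOrderedEnum hf
  have ht0 := ht.zero_eq hn0 fun k hk => hp0 ▸ (hpmem k hk).1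
  obtain ⟨y, hy, hper⟩ := hp.exists_isPeriodicPt_mem_cell hf
  have hcell : ∀ m < n, f^[m] y ∈ cell p n (n - 1 - m) := fun m hm =>
    (hp.mapsTo_continuousOn_iterate_cell hf (by omega) (by omega)).1 hy
  have hIcc : ∀ m < n, f^[m] y ∈ Icc 0 1 := fun m hm => hp.cell_subset_Icc (by omega) (hcell m hm)
  have horbit : ∀ m < n, f^[m] y ∈ cell p n (n - 1 - m) ∧ f^[m] y < 1 ∧ ∀ k < n, f^[m] y ≠ p k :=
    fun m hm => ⟨hcell m hm, hf.lt_one_of_isPeriodicPt (hIcc m hm) (hper.apply_iterate m) hn0,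
      fun k hk h => hp.not_isPeriodicPt hf hk hn0 (h ▸ hper.apply_iterate m)⟩
  refine ⟨t, ht0.trans hp0, ht.last,
    fun i j hij hj => ht.strictMonoOn (mem_Iic.2 (by omega)) hj hij,
    ht.exists_p_of_one_le ht0, ht.exists_t_of_one_le ht0 hinj, fun m => f^[m] y, hIcc,
    fun m _ => ?_, fun i hi j hj hij h => ?_, fun i hi => ht.existsUnique_mem_Ioo hinj horbit hi⟩
  · change f (f^[m] y) = f^[(m + 1) % n] y
    rw [hper.iterate_mod_apply, iterate_succ_apply']
  · have := eq_of_mem_cell (k' := n - 1 - j) hinj (by omega) (by omega) (hcell i hi)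
      (by rw [show f^[i] y = f^[j] y from h]; exact hcell j hj)
    omega

/-- If `f` satisfies (A1)–(A4) with termination number `n` and is a contraction on each
branch, then `f` has a periodic orbit of period `n`, and each of the `n` closed
subintervals of `[0,1]` determined by the partition points `{f^{-i}(0) : i = 1,…,n-1}`
together with `0` and `1` contains exactly one orbit point in its interior.
Here `t : ℕ → ℝ` enumerates the partition points in increasing order with `t 0 = 0`
and `t n = 1`, and `q : ℕ → ℝ` is the periodic orbit. -/
theorem periodic_orbit_in_partition (f : ℝ → ℝ) (c : ℝ) (hc : c ∈ Set.Ioo (0 : ℝ) 1)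
    (hmaps : Set.MapsTo f (Set.Icc 0 1) (Set.Icc 0 1))
    (hA1 : f 1 < f 0)
    (hA2left : Filter.Tendsto f (nhdsWithin c (Set.Iio c)) (nhds 1))
    (hA2right : f c = 0)
    (hA3left : StrictMonoOn f (Set.Ico 0 c))
    (hA3right : StrictMonoOn f (Set.Icc c 1))
    (κ : ℝ) (hκ : κ < 1)
    (hcontract₁ : ∀ u ∈ Set.Ico (0 : ℝ) c, ∀ v ∈ Set.Ico (0 : ℝ) c,
      |f u - f v| ≤ κ * |u - v|)
    (hcontract₂ : ∀ u ∈ Set.Icc c 1, ∀ v ∈ Set.Icc c 1,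
      |f u - f v| ≤ κ * |u - v|)
    (n : ℕ) (hn : 2 ≤ n)
    (p : ℕ → ℝ) (hp0 : p 0 = 0)
    (hpmem : ∀ i < n, p i ∈ Set.Ico (0 : ℝ) 1)
    (hpstep : ∀ i, i + 1 < n → f (p (i + 1)) = p i)
    (hA4 : ¬ ∃ z ∈ Set.Icc (0 : ℝ) 1, f z = p (n - 1)) :
    ∃ t : ℕ → ℝ, t 0 = 0 ∧ t n = 1 ∧
      (∀ i j, i < j → j ≤ n → t i < t j) ∧
      (∀ i, 1 ≤ i → i ≤ n - 1 → ∃ j, 1 ≤ j ∧ j ≤ n - 1 ∧ t i = p j) ∧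
      (∀ j, 1 ≤ j → j ≤ n - 1 → ∃ i, 1 ≤ i ∧ i ≤ n - 1 ∧ t i = p j) ∧
      ∃ q : ℕ → ℝ,
        (∀ i < n, q i ∈ Set.Icc (0 : ℝ) 1) ∧
        (∀ i < n, f (q i) = q ((i + 1) % n)) ∧
        (∀ i < n, ∀ j < n, i ≠ j → q i ≠ q j) ∧
        (∀ i < n, ∃! j, j < n ∧ q j ∈ Set.Ioo (t i) (t (i + 1))) :=
  periodic_orbit_in_partition_general f c hc hmaps hA1 hA2left hA2right hA3left hA3right κ
    hcontract₁ hcontract₂ n hn p hp0 hpmem hpstep hA4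
end
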